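/- arXiv:1208.5590 — 5 statements merged into one kernel-verified Lean document; each statement's English description precedes it below -/
import Mathlib

section
/- For every integer N ≥ 0, the L¹ norm over the circle of the Dirichlet kernel D_N(x) = Σ_{j=-N}^{N} e^{2πijx} satisfies ‖D_N‖₁ ≤ 1 + log(2N+1). -/
/-!
Writing `w = e^{2πix}`, the sum `(w - 1) D_N(x) = w^{N+1} - w^{-N}` telescopes, and
`|w - 1| = 2 |sin πx|`, so `|D_N(x)| ≤ 1 / |sin πx|`; trivially also `|D_N(x)| ≤ 2N + 1`.
By Jordan's inequality `sin πx ≥ 2x` on `[0, 1/2]`, and `sin π(1 - x) = sin πx`, so each half of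
the circle contributes at most `∫₀^{1/2} min (2N + 1, 1/(2x)) dx = 1/2 + log (2N + 1) / 2`.
-/

open Finset in
theorem sub_one_mul_sum_Ico_zpow {K : Type*} [DivisionRing K] {w : K} (hw : w ≠ 0) {m n : ℤ}
    (hmn : m ≤ n) : (w - 1) * ∑ j ∈ Ico m n, w ^ j = w ^ n - w ^ m := by
  induction n, hmn using Int.leInduction with
  | base => simp
  | succ n hmn ih =>
    rw [← sum_Ico_add_eq_sum_Ico_add_one hmn, mul_add, ih, sub_one_mul, ← zpow_one_add₀ hw,
      add_comm 1 n]
    abel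

section RealAnalysis

open Real Set intervalIntegral MeasureTheory

theorem two_mul_le_sin_pi_mul {x : ℝ} (hx₀ : 0 ≤ x) (hx : x ≤ 1 / 2) : 2 * x ≤ sin (π * x) :=
  calc 2 * x = 2 / π * (π * x) := by field_simp
    _ ≤ sin (π * x) := mul_le_sin (by positivity) (by nlinarith [pi_pos])

theorem integral_le_of_le_of_le_div {f : ℝ → ℝ} {a c M : ℝ} (hc : 0 < c) (hM : 0 < M)
    (hcaM : c ≤ a * M) (hf : IntervalIntegrable f volume 0 a)
    (hfM : ∀ x ∈ Icc 0 a, f x ≤ M) (hfc : ∀ x ∈ Ioc 0 a, f x ≤ c / x) :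
    ∫ x in 0..a, f x ≤ c * (1 + log (a * M / c)) := by
  set δ := c / M -- where the bounds `M` and `c / x` cross
  have hδ : 0 < δ := div_pos hc hM
  have hδa : δ ≤ a := (div_le_iff₀ hM).2 hcaM
  have hδ_mem : δ ∈ uIcc 0 a := by rw [uIcc_of_le (hδ.le.trans hδa)]; exact ⟨hδ.le, hδa⟩
  have hf₁ := hf.mono_set (uIcc_subset_uIcc left_mem_uIcc hδ_mem)
  have hf₂ := hf.mono_set (uIcc_subset_uIcc hδ_mem right_mem_uIcc)
  have head : ∫ x in 0..δ, f x ≤ c := calc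
    ∫ x in 0..δ, f x ≤ ∫ _ in 0..δ, M :=
      integral_mono_on hδ.le hf₁ intervalIntegrable_const fun x hx => hfM x ⟨hx.1, hx.2.trans hδa⟩
    _ = c := by simp [δ, div_mul_cancel₀ _ hM.ne']
  have tail : ∫ x in δ..a, f x ≤ c * log (a * M / c) := calc
    ∫ x in δ..a, f x ≤ ∫ x in δ..a, c * x⁻¹ := by
      refine integral_mono_on hδa hf₂ ((intervalIntegrable_inv_iff.2 (Or.inr ?_)).const_mul c)
        fun x hx => hfc x ⟨hδ.trans_le hx.1, hx.2⟩
      rw [uIcc_of_le hδa]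
      exact fun h => hδ.not_ge h.1
    _ = c * log (a * M / c) := by
      rw [intervalIntegral.integral_const_mul, integral_inv_of_pos hδ (hδ.trans_le hδa),
        div_div_eq_mul_div]
  rw [← integral_add_adjacent_intervals hf₁ hf₂]
  linarith

end RealAnalysis

open Complex Filter

noncomputable def dirichletKernel (N : ℕ) (x : ℝ) : ℂ :=
  ∑ j ∈ Finset.Icc (-(N : ℤ)) N, exp (2 * (Real.pi : ℂ) * I * (j : ℂ) * (x : ℂ))

namespace dirichletKernel

theorem continuous (N : ℕ) : Continuous (dirichletKernel N) := by
  unfold dirichletKernel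
  fun_prop

theorem eq_sum_zpow (N : ℕ) (x : ℝ) :
    dirichletKernel N x =
      ∑ j ∈ Finset.Ico (-(N : ℤ)) (N + 1), exp (I * (2 * Real.pi * x : ℝ)) ^ j := by
  rw [Finset.Ico_add_one_right_eq_Icc]
  refine Finset.sum_congr rfl fun j _ => ?_
  rw [← exp_int_mul]
  push_cast
  ring_nf

theorem norm_le (N : ℕ) (x : ℝ) : ‖dirichletKernel N x‖ ≤ 2 * N + 1 := by
  rw [eq_sum_zpow]
  refine (norm_sum_le _ _).trans_eq ?_
  simp only [norm_zpow, norm_exp_I_mul_ofReal, one_zpow, Finset.sum_const, Int.card_Ico,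
    nsmul_eq_mul, mul_one]
  norm_cast
  omega

theorem norm_mul_abs_sin_le (N : ℕ) (x : ℝ) :
    ‖dirichletKernel N x‖ * |Real.sin (Real.pi * x)| ≤ 1 := by
  set w := exp (I * (2 * Real.pi * x : ℝ))
  have hw : ‖w - 1‖ = 2 * |Real.sin (Real.pi * x)| := by
    rw [norm_exp_I_mul_ofReal_sub_one, norm_mul, Real.norm_eq_abs, Real.norm_eq_abs]
    ring_nf
  have : ‖w - 1‖ * ‖dirichletKernel N x‖ ≤ 2 := by
    rw [← norm_mul, eq_sum_zpow, sub_one_mul_sum_Ico_zpow (exp_ne_zero _) (by omega)]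
    refine (norm_sub_le _ _).trans_eq ?_
    simp only [norm_zpow, norm_exp_I_mul_ofReal, one_zpow]
    norm_num
  rw [hw] at this
  linarith

theorem norm_le_of_le_abs_sin (N : ℕ) {x t : ℝ} (ht : 0 < t)
    (h : t ≤ |Real.sin (Real.pi * x)|) : ‖dirichletKernel N x‖ ≤ 1 / t := by
  rw [le_div_iff₀ ht]
  exact (mul_le_mul_of_nonneg_left h (norm_nonneg _)).trans (norm_mul_abs_sin_le N x)

theorem integral_norm_comp_le (N : ℕ) {g : ℝ → ℝ} (hg : Continuous g)
    (hgx : ∀ x ∈ Set.Ioc (0 : ℝ) (1 / 2), 2 * x ≤ |Real.sin (Real.pi * g x)|) :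
    ∫ x in (0:ℝ)..1 / 2, ‖dirichletKernel N (g x)‖ ≤ 1 / 2 * (1 + Real.log (2 * N + 1)) := by
  have hcaM : (1 / 2 : ℝ) ≤ 1 / 2 * (2 * N + 1) := by linarith [N.cast_nonneg (α := ℝ)]
  have := integral_le_of_le_of_le_div (by norm_num) (by positivity) hcaM
    (((continuous N).comp hg).norm.intervalIntegrable _ _) (fun x _ => norm_le N (g x))
    fun x hx => by
      rw [div_div]
      exact norm_le_of_le_abs_sin N (by linarith [hx.1]) (hgx x hx)
  rwa [mul_div_cancel_left₀ _ (by norm_num)] at this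

end dirichletKernel

/-- The Dirichlet kernel `D_N(x) = ∑_{j=-N}^N e^{2πijx}` satisfies
`‖D_N‖₁ ≤ 1 + log (2N+1)` on the circle `T = ℝ/ℤ` (normalized Haar measure,
realized as the integral over one period). -/
theorem dirichlet_kernel_L1_bound (N : ℕ) :
    (∫ x in (0:ℝ)..1,
      ‖∑ j ∈ Finset.Icc (-(N:ℤ)) (N:ℤ),
        Complex.exp (2 * (Real.pi : ℂ) * Complex.I * (j : ℂ) * (x : ℂ))‖) ≤
      1 + Real.log (2 * N + 1) := by
  change ∫ x in (0:ℝ)..1, ‖dirichletKernel N x‖ ≤ _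
  have jordan (x : ℝ) (hx : x ∈ Set.Ioc (0 : ℝ) (1 / 2)) : 2 * x ≤ |Real.sin (Real.pi * x)| :=
    (two_mul_le_sin_pi_mul hx.1.le hx.2).trans (le_abs_self _)
  have left := dirichletKernel.integral_norm_comp_le N continuous_id jordan
  have right := dirichletKernel.integral_norm_comp_le N (g := (1 - ·))
    (continuous_const.sub continuous_id) fun x hx => by
      rw [mul_one_sub, Real.sin_pi_sub]
      exact jordan x hx
  have hcont := (dirichletKernel.continuous N).norm
  rw [← intervalIntegral.integral_add_adjacent_intervals (b := 1 / 2)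
    (hcont.intervalIntegrable _ _) (hcont.intervalIntegrable _ _)]
  rw [intervalIntegral.integral_comp_sub_left (fun x => ‖dirichletKernel N x‖) 1] at right
  norm_num at left right
  linarith
end

section
/- (Fejér–Riesz) If p is a nonnegative trigonometric polynomial of one variable with frequencies contained in {−n, ..., n}, then there exists a trigonometric polynomial q with frequencies contained in {0, ..., n} such that p = |q|². -/
open Complex Filter

/-!
Write `p(x) = e(-n x) P(e(x))` with `e(x) = exp(2πix)` and `P` a polynomial of degree at most `2n`.
Since `p` is real, `P` is conjugate self-reciprocal: `z^(2n) conj (P (1/conj z)) = P z`. So the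
coefficients of `1` and `z^(2n)` are conjugate, and the roots of `P` are symmetric under
`w ↦ 1/conj w`. A root on the unit circle is a minimum of `p`, hence a multiple root. Either way
`(X - w)(X - 1/conj w)` divides `P`, and on the unit circle
`(z - w)(z - 1/conj w) = -(z / conj w) |z - w|²`. Dividing by this factor writes `p` as
`|e(x) - w|²` times a trigonometric polynomial of degree `n - 1`, which is nonnegative off the
countable set where `e(x) = w`, hence everywhere by continuity. When `P(0) = 0` this is replaced by
dividing by `X`: the top coefficient vanishes too, so `P / X` has degree at most `2(n - 1)`.
Induction on `n` finishes the proof.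
-/

open Polynomial Real FourierTransform
open scoped ComplexOrder ComplexConjugate

lemma exists_fourierChar_eq {w : ℂ} (hw : ‖w‖ = 1) : ∃ x : ℝ, (𝐞 x : ℂ) = w := by
  obtain ⟨t, ht⟩ := Circle.exp_surjective ⟨w, mem_sphere_zero_iff_norm.2 hw⟩
  refine ⟨t / (2 * π), ?_⟩
  rw [Real.fourierChar_apply', mul_div_cancel₀ _ (by positivity), ht]

lemma countable_setOf_fourierChar_eq (w : ℂ) : {x : ℝ | (𝐞 x : ℂ) = w}.Countable := by
  rcases Set.eq_empty_or_nonempty {x : ℝ | (𝐞 x : ℂ) = w} with h | ⟨y, hy⟩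
  · simp [h]
  refine (Set.countable_range fun m : ℤ => y + m).mono fun x hx => ?_
  obtain ⟨m, hm⟩ := Circle.exp_eq_exp.1 (Circle.coe_injective (hx.trans hy.symm) :
    Circle.exp (2 * π * x) = Circle.exp (2 * π * y))
  exact ⟨m, by nlinarith [Real.pi_pos]⟩

lemma infinite_range_fourierChar : (Set.range fun x : ℝ => (𝐞 x : ℂ)).Infinite := by
  intro hfin
  refine Cardinal.not_countable_real <|
    (hfin.countable.biUnion fun w _ => countable_setOf_fourierChar_eq w).mono fun x _ => ?_
  exact Set.mem_biUnion (Set.mem_range_self x) rfl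

lemma nonneg_of_nonneg_of_fourierChar_ne {g : ℝ → ℂ} (hg : Continuous g) {w : ℂ}
    (h : ∀ x, (𝐞 x : ℂ) ≠ w → 0 ≤ g x) (x : ℝ) : 0 ≤ g x := by
  have hdense : Dense {x | 0 ≤ g x} :=
    ((countable_setOf_fourierChar_eq w).dense_compl ℝ).mono fun x hx => h x hx
  have hclosed : IsClosed {x | 0 ≤ g x} := isClosed_le continuous_const hg
  show x ∈ {x | 0 ≤ g x}
  rw [← hclosed.closure_eq, hdense.closure_eq]
  trivial

lemma fourierChar_zpow (j : ℤ) (x : ℝ) :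
    (𝐞 x : ℂ) ^ j = Complex.exp (2 * (π : ℂ) * I * (j : ℂ) * (x : ℂ)) := by
  rw [← Circle.coe_zpow, ← AddChar.map_zsmul_eq_zpow, Real.fourierChar_apply]
  congr 1
  push_cast
  ring

lemma IsLocalMin.hasDerivAt_eq_zero_complexOrder {f : ℝ → ℂ} {f' : ℂ} {a : ℝ}
    (h : IsLocalMin f a) (hf : HasDerivAt f f' a) : f' = 0 := by
  apply Complex.ext
  · exact IsLocalMin.hasDerivAt_eq_zero (h.mono fun x hx => hx.1)
      (reCLM.hasFDerivAt.comp_hasDerivAt a hf)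
  · exact IsLocalMin.hasDerivAt_eq_zero (h.mono fun x hx => hx.2.le)
      (imCLM.hasFDerivAt.comp_hasDerivAt a hf)

lemma sub_mul_sub_conj_inv {z w : ℂ} (hz : ‖z‖ = 1) (hw : w ≠ 0) :
    (z - w) * (z - (conj w)⁻¹) = -(z * (conj w)⁻¹) * (‖z - w‖ ^ 2 : ℝ) := by
  have hz0 : z ≠ 0 := ne_zero_of_norm_ne_zero (hz.trans_ne one_ne_zero)
  have hw' : conj w ≠ 0 := (_root_.map_ne_zero _).2 hw
  rw [ofReal_pow, ← mul_conj', map_sub, ← inv_eq_conj hz]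
  field_simp
  ring

lemma eval_reflect_map_conj {N : ℕ} {P : ℂ[X]} (hP : P.natDegree ≤ N) {z : ℂ} (hz : z ≠ 0) :
    (reflect N (P.map (starRingEnd ℂ))).eval z = z ^ N * conj (P.eval (conj z)⁻¹) := by
  let := invertibleOfNonzero (inv_ne_zero hz)
  have h := eval₂_reflect_mul_pow (RingHom.id ℂ) z⁻¹ N (P.map (starRingEnd ℂ))
    (natDegree_map_le.trans hP)
  rw [invOf_eq_inv, inv_inv, ← eval, ← eval, eval_map, ← eq_mul_inv_iff_mul_eq₀ (by simp [hz]),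
    inv_pow, inv_inv] at h
  rw [h, mul_comm, eval, hom_eval₂]
  simp

section CircleNonneg

variable {M : ℕ} {P : ℂ[X]}

lemma reflect_map_conj_eq_self (hdeg : P.natDegree ≤ 2 * M)
    (hreal : ∀ z : ℂ, ‖z‖ = 1 → (z⁻¹ ^ M * P.eval z).im = 0) :
    reflect (2 * M) (P.map (starRingEnd ℂ)) = P := by
  have hcircle : {z : ℂ | ‖z‖ = 1}.Infinite :=
    infinite_range_fourierChar.mono <| Set.range_subset_iff.2 fun x => Circle.norm_coe _
  refine eq_of_infinite_eval_eq _ _ <| hcircle.mono fun z hz => ?_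
  have hz0 : z ≠ 0 := ne_zero_of_norm_ne_zero (hz.trans_ne one_ne_zero)
  have hconj := Complex.conj_eq_iff_im.2 (hreal z hz)
  rw [map_mul, map_pow, map_inv₀, ← inv_eq_conj hz, inv_inv] at hconj
  rw [Set.mem_ofPred_eq, eval_reflect_map_conj hdeg hz0, ← inv_eq_conj hz, inv_inv, two_mul,
    pow_add, mul_assoc, hconj, ← mul_assoc, ← mul_pow, mul_inv_cancel₀ hz0, one_pow, one_mul]

lemma coeff_two_mul_eq_conj_coeff_zero (hdeg : P.natDegree ≤ 2 * M)
    (hreal : ∀ z : ℂ, ‖z‖ = 1 → (z⁻¹ ^ M * P.eval z).im = 0) :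
    P.coeff (2 * M) = conj (P.coeff 0) := by
  conv_lhs => rw [← reflect_map_conj_eq_self hdeg hreal]
  simp [coeff_reflect]

lemma isRoot_conj_inv (hdeg : P.natDegree ≤ 2 * M)
    (hreal : ∀ z : ℂ, ‖z‖ = 1 → (z⁻¹ ^ M * P.eval z).im = 0) {w : ℂ} (hw : w ≠ 0)
    (hroot : P.IsRoot w) : P.IsRoot (conj w)⁻¹ := by
  rw [IsRoot, ← reflect_map_conj_eq_self hdeg hreal,
    eval_reflect_map_conj hdeg (inv_ne_zero ((_root_.map_ne_zero _).2 hw))]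
  simp [hroot.eq_zero]

lemma isRoot_derivative_of_norm_eq_one (hP : ∀ z : ℂ, ‖z‖ = 1 → 0 ≤ z⁻¹ ^ M * P.eval z)
    {w : ℂ} (hw : ‖w‖ = 1) (hroot : P.IsRoot w) : P.derivative.IsRoot w := by
  obtain ⟨a, rfl⟩ := exists_fourierChar_eq hw
  have he := hasDerivAt_fourierChar a
  have hderiv := ((he.inv (Circle.coe_ne_zero _)).pow M).mul ((P.hasDerivAt _).comp a he)
  have hmin : IsLocalMin (fun x : ℝ => (𝐞 x : ℂ)⁻¹ ^ M * P.eval (𝐞 x : ℂ)) a :=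
    Eventually.of_forall fun x => by simpa [hroot.eq_zero] using hP _ (Circle.norm_coe (𝐞 x))
  simpa [hroot.eq_zero, Real.pi_ne_zero] using hmin.hasDerivAt_eq_zero_complexOrder hderiv

lemma X_sub_C_mul_X_sub_C_conj_inv_dvd (hdeg : P.natDegree ≤ 2 * M)
    (hP : ∀ z : ℂ, ‖z‖ = 1 → 0 ≤ z⁻¹ ^ M * P.eval z) (hP0 : P ≠ 0) {w : ℂ} (hw : w ≠ 0)
    (hroot : P.IsRoot w) : (X - C w) * (X - C (conj w)⁻¹) ∣ P := by
  have hreal z hz := (Complex.nonneg_iff.1 (hP z hz)).2.symm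
  by_cases hfix : (conj w)⁻¹ = w
  · have hnorm : ‖w‖ = 1 := by
      have h : ((‖w‖ ^ 2 : ℝ) : ℂ) = 1 := by
        rw [ofReal_pow, ← mul_conj']
        nth_rw 1 [← hfix]
        exact inv_mul_cancel₀ ((_root_.map_ne_zero _).2 hw)
      exact (pow_eq_one_iff_of_nonneg (norm_nonneg w) two_ne_zero).1 (by exact_mod_cast h)
    rw [hfix, ← sq, ← le_rootMultiplicity_iff hP0]
    exact (one_lt_rootMultiplicity_iff_isRoot hP0).2
      ⟨hroot, isRoot_derivative_of_norm_eq_one hP hnorm hroot⟩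
  · exact (isCoprime_X_sub_C_of_isUnit_sub (sub_ne_zero.2 (Ne.symm hfix)).isUnit).mul_dvd
      (dvd_iff_isRoot.2 hroot) (dvd_iff_isRoot.2 (isRoot_conj_inv hdeg hreal hw hroot))

lemma exists_eq_X_sub_C_mul_X_sub_C_conj_inv_mul (hdeg : P.natDegree ≤ 2 * (M + 1))
    (hP : ∀ z : ℂ, ‖z‖ = 1 → 0 ≤ z⁻¹ ^ (M + 1) * P.eval z) (h0 : P.coeff 0 ≠ 0) :
    ∃ w R, w ≠ 0 ∧ R.natDegree ≤ 2 * M ∧ P = (X - C w) * (X - C (conj w)⁻¹) * R := by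
  have hreal z hz := (Complex.nonneg_iff.1 (hP z hz)).2.symm
  have hP0 : P ≠ 0 := by rintro rfl; exact h0 (coeff_zero _)
  have hnatDeg : P.natDegree = 2 * (M + 1) := by
    refine le_antisymm hdeg (le_natDegree_of_ne_zero ?_)
    rwa [coeff_two_mul_eq_conj_coeff_zero hdeg hreal, _root_.map_ne_zero]
  obtain ⟨w, hroot⟩ := Complex.exists_root (f := P) (natDegree_pos_iff_degree_pos.1 (by omega))
  have hw : w ≠ 0 := by
    rintro rfl
    exact h0 (by rwa [coeff_zero_eq_eval_zero])
  obtain ⟨R, hR⟩ := X_sub_C_mul_X_sub_C_conj_inv_dvd hdeg hP hP0 hw hroot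
  refine ⟨w, R, hw, ?_, hR⟩
  have hR0 : R ≠ 0 := by rintro rfl; exact hP0 (by simpa using hR)
  have := congrArg natDegree hR
  rw [natDegree_mul (by simp [X_sub_C_ne_zero]) hR0, natDegree_mul (X_sub_C_ne_zero _)
    (X_sub_C_ne_zero _), natDegree_X_sub_C, natDegree_X_sub_C] at this
  omega

lemma inv_pow_succ_mul_eval_X_sub_C_mul_X_sub_C_conj_inv_mul (R : ℂ[X]) {z w : ℂ}
    (hz : ‖z‖ = 1) (hw : w ≠ 0) :
    z⁻¹ ^ (M + 1) * ((X - C w) * (X - C (conj w)⁻¹) * R).eval z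
      = ‖z - w‖ ^ 2 * (z⁻¹ ^ M * (C (-(conj w)⁻¹) * R).eval z) := by
  have hz0 : z ≠ 0 := ne_zero_of_norm_ne_zero (hz.trans_ne one_ne_zero)
  simp only [eval_mul, eval_sub, eval_X, eval_C, sub_mul_sub_conj_inv hz hw, pow_succ]
  field_simp
  push_cast
  ring

lemma nonneg_inv_pow_mul_eval_C_mul {R : ℂ[X]} {w : ℂ} (hw : w ≠ 0)
    (hP : ∀ z : ℂ, ‖z‖ = 1 → 0 ≤ z⁻¹ ^ (M + 1) * ((X - C w) * (X - C (conj w)⁻¹) * R).eval z)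
    {z : ℂ} (hz : ‖z‖ = 1) : 0 ≤ z⁻¹ ^ M * (C (-(conj w)⁻¹) * R).eval z := by
  obtain ⟨x, rfl⟩ := exists_fourierChar_eq hz
  have he : Continuous fun x : ℝ => (𝐞 x : ℂ) := continuous_subtype_val.comp continuous_fourierChar
  refine nonneg_of_nonneg_of_fourierChar_ne (w := w)
    (((he.inv₀ fun x => Circle.coe_ne_zero _).pow M).mul ((Polynomial.continuous _).comp he))
    (fun y hy => ?_) x
  have hpos : 0 < ‖(𝐞 y : ℂ) - w‖ ^ 2 := pow_pos (norm_pos_iff.2 (sub_ne_zero.2 hy)) 2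
  have := mul_nonneg (zero_le_real.2 (inv_nonneg.2 hpos.le)) <|
    inv_pow_succ_mul_eval_X_sub_C_mul_X_sub_C_conj_inv_mul R (Circle.norm_coe (𝐞 y)) hw ▸
      hP _ (Circle.norm_coe (𝐞 y))
  rwa [← mul_assoc, ← ofReal_pow, ← ofReal_mul, inv_mul_cancel₀ hpos.ne', ofReal_one,
    one_mul] at this

lemma natDegree_divX_le_of_coeff_zero_eq_zero (hdeg : P.natDegree ≤ 2 * (M + 1))
    (hreal : ∀ z : ℂ, ‖z‖ = 1 → (z⁻¹ ^ (M + 1) * P.eval z).im = 0) (h0 : P.coeff 0 = 0) :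
    P.divX.natDegree ≤ 2 * M := by
  refine natDegree_le_iff_coeff_eq_zero.2 fun k hk => ?_
  rw [coeff_divX]
  rcases (show k + 1 = 2 * (M + 1) ∨ 2 * (M + 1) < k + 1 by omega) with hk' | hk'
  · rw [hk', coeff_two_mul_eq_conj_coeff_zero hdeg hreal, h0, map_zero]
  · exact coeff_eq_zero_of_natDegree_lt (hdeg.trans_lt hk')

lemma inv_pow_succ_mul_eval_of_coeff_zero_eq_zero (h0 : P.coeff 0 = 0) {z : ℂ} (hz : z ≠ 0) :
    z⁻¹ ^ (M + 1) * P.eval z = z⁻¹ ^ M * P.divX.eval z := by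
  conv_lhs => rw [← X_mul_divX_add P, h0]
  simp only [eval_add, eval_mul, eval_X, eval_C, add_zero, pow_succ]
  field_simp

theorem exists_sq_norm_eq_of_nonneg (M : ℕ) (P : ℂ[X]) (hdeg : P.natDegree ≤ 2 * M)
    (hP : ∀ z : ℂ, ‖z‖ = 1 → 0 ≤ z⁻¹ ^ M * P.eval z) :
    ∃ Q : ℂ[X], Q.natDegree ≤ M ∧ ∀ z : ℂ, ‖z‖ = 1 → z⁻¹ ^ M * P.eval z = ‖Q.eval z‖ ^ 2 := by
  induction M generalizing P with
  | zero =>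
    obtain ⟨c, rfl⟩ : ∃ c, P = C c := ⟨_, eq_C_of_natDegree_le_zero (by simpa using hdeg)⟩
    have hc : 0 ≤ c := by simpa using hP 1 (by simp)
    refine ⟨C (√c.re : ℂ), by simp, fun z _ => ?_⟩
    simp only [pow_zero, one_mul, eval_C, norm_real, Real.norm_eq_abs]
    rw [abs_of_nonneg (Real.sqrt_nonneg _), ← ofReal_pow, Real.sq_sqrt (nonneg_iff.1 hc).1]
    exact eq_re_of_ofReal_le (r := 0) (by simpa using hc)
  | succ M ih =>
    by_cases h0 : P.coeff 0 = 0
    · have hshift z (hz : ‖z‖ = 1) := inv_pow_succ_mul_eval_of_coeff_zero_eq_zero (M := M) h0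
        (ne_zero_of_norm_ne_zero (hz.trans_ne one_ne_zero))
      have hreal z hz := (Complex.nonneg_iff.1 (hP z hz)).2.symm
      obtain ⟨Q, hQ, hQP⟩ := ih P.divX (natDegree_divX_le_of_coeff_zero_eq_zero hdeg hreal h0)
        fun z hz => hshift z hz ▸ hP z hz
      exact ⟨Q, hQ.trans M.le_succ, fun z hz => (hshift z hz).trans (hQP z hz)⟩
    · obtain ⟨w, R, hw, hR, rfl⟩ := exists_eq_X_sub_C_mul_X_sub_C_conj_inv_mul hdeg hP h0
      obtain ⟨Q, hQ, hQR⟩ := ih _ ((natDegree_C_mul_le _ _).trans hR)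
        fun z hz => nonneg_inv_pow_mul_eval_C_mul hw hP hz
      refine ⟨(X - C w) * Q, natDegree_mul_le.trans (by rw [natDegree_X_sub_C]; omega),
        fun z hz => ?_⟩
      rw [inv_pow_succ_mul_eval_X_sub_C_mul_X_sub_C_conj_inv_mul R hz hw, hQR z hz, eval_mul,
        norm_mul]
      simp only [eval_sub, eval_X, eval_C]
      push_cast
      ring

end CircleNonneg

lemma natDegree_sum_C_mul_X_pow_toNat_le (n : ℕ) (a : ℤ → ℂ) :
    (∑ j ∈ Finset.Icc (-(n : ℤ)) n, C (a j) * X ^ (j + n).toNat).natDegree ≤ 2 * n :=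
  natDegree_sum_le_of_forall_le _ _ fun j hj =>
    (natDegree_C_mul_X_pow_le _ _).trans (by rw [Finset.mem_Icc] at hj; omega)

lemma inv_pow_mul_eval_sum_C_mul_X_pow_toNat (n : ℕ) (a : ℤ → ℂ) {z : ℂ} (hz : z ≠ 0) :
    z⁻¹ ^ n * (∑ j ∈ Finset.Icc (-(n : ℤ)) n, C (a j) * X ^ (j + n).toNat).eval z
      = ∑ j ∈ Finset.Icc (-(n : ℤ)) n, a j * z ^ j := by
  rw [eval_finsetSum, Finset.mul_sum]
  refine Finset.sum_congr rfl fun j hj => ?_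
  rw [Finset.mem_Icc] at hj
  rw [eval_mul, eval_C, eval_pow, eval_X, ← zpow_natCast z, Int.toNat_of_nonneg (by omega),
    zpow_add₀ hz, zpow_natCast, inv_pow]
  field_simp

lemma eval_eq_sum_Icc_coeff_toNat_mul_zpow {n : ℕ} {Q : ℂ[X]} (hQ : Q.natDegree ≤ n) (z : ℂ) :
    Q.eval z = ∑ j ∈ Finset.Icc (0 : ℤ) n, Q.coeff j.toNat * z ^ j := by
  rw [eval_eq_sum_range' (Nat.lt_succ_of_le hQ), Int.Icc_eq_finset_map, Finset.sum_map]
  simp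

/-- Fejér–Riesz: a nonnegative trigonometric polynomial with frequencies in
`{-n,…,n}` is the squared modulus of a trigonometric polynomial with
frequencies in `{0,…,n}`. -/
theorem fejer_riesz (n : ℕ) (a : ℤ → ℂ) (p : ℝ → ℂ)
    (hp : ∀ x : ℝ, p x = ∑ j ∈ Finset.Icc (-(n:ℤ)) (n:ℤ),
      a j * Complex.exp (2 * (Real.pi : ℂ) * Complex.I * (j : ℂ) * (x : ℂ)))
    (hreal : ∀ x : ℝ, (p x).im = 0) (hpos : ∀ x : ℝ, 0 ≤ (p x).re) :
    ∃ b : ℤ → ℂ, (∀ j : ℤ, (j < 0 ∨ (n:ℤ) < j) → b j = 0) ∧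
      ∀ x : ℝ, p x =
        ((norm (∑ j ∈ Finset.Icc (0:ℤ) (n:ℤ),
          b j * Complex.exp (2 * (Real.pi : ℂ) * Complex.I * (j : ℂ) * (x : ℂ))))^2 : ℝ) := by
  set P : ℂ[X] := ∑ j ∈ Finset.Icc (-(n : ℤ)) n, C (a j) * X ^ (j + n).toNat
  have hpP (x : ℝ) : p x = (𝐞 x : ℂ)⁻¹ ^ n * P.eval (𝐞 x : ℂ) := by
    simp only [hp, P, inv_pow_mul_eval_sum_C_mul_X_pow_toNat n a (Circle.coe_ne_zero _),
      fourierChar_zpow]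
  obtain ⟨Q, hQdeg, hQ⟩ := exists_sq_norm_eq_of_nonneg n P
    (natDegree_sum_C_mul_X_pow_toNat_le n a) fun z hz => by
      obtain ⟨x, rfl⟩ := exists_fourierChar_eq hz
      exact hpP x ▸ nonneg_iff.2 ⟨hpos x, (hreal x).symm⟩
  refine ⟨fun j => if 0 ≤ j then Q.coeff j.toNat else 0, fun j hj => ?_, fun x => ?_⟩
  · dsimp only
    split_ifs
    · exact coeff_eq_zero_of_natDegree_lt (by omega)
    · rfl
  · rw [hpP, hQ _ (Circle.norm_coe _), eval_eq_sum_Icc_coeff_toNat_mul_zpow hQdeg, ofReal_pow]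
    congr 3
    refine Finset.sum_congr rfl fun j hj => ?_
    dsimp only
    rw [if_pos (Finset.mem_Icc.1 hj).1, fourierChar_zpow]
end

section
/- If g ∈ SL(2,ℤ) and g₁₁ + α g₁₂ ≠ 0, then the image of the lattice set F(α,β) = {(j,k) ∈ ℤ² : |k − jα| < β} under the automorphism (j,k) ↦ (g₁₁ j + g₁₂ k, g₂₁ j + g₂₂ k) equals F((g₂₁ + α g₂₂)/(g₁₁ + α g₁₂), β/|g₁₁ + α g₁₂|). -/
open Filter

/-- `F(α,β) = {(j,k) ∈ ℤ² : |k - jα| < β}`. -/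
def latticeF (α β : ℝ) : Set (ℤ × ℤ) := {p | |(p.2 : ℝ) - (p.1 : ℝ) * α| < β}

/-!
For `g = [[a, b], [c, d]]` write `γ = a + α b` and `α' = (c + α d) / γ`. If `(j', k') = g (j, k)`,
then `γ (k' - j' α') = det g · (k - j α)`, so for `det g = 1` the matrix `g` carries the strip
`|k - j α| < β` onto the strip `|k' - j' α'| < β / |γ|`; since `g` permutes `ℤ²`, this is an
equality of sets.
-/

def sl2Equiv {a b c d : ℤ} (hdet : a * d - b * c = 1) : ℤ × ℤ ≃ ℤ × ℤ where
  toFun p := (a * p.1 + b * p.2, c * p.1 + d * p.2)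
  invFun q := (d * q.1 - b * q.2, -c * q.1 + a * q.2)
  left_inv p := by
    ext
    · linear_combination p.1 * hdet
    · linear_combination p.2 * hdet
  right_inv q := by
    ext
    · linear_combination q.1 * hdet
    · linear_combination q.2 * hdet

theorem sub_mul_slope_eq_div {α : ℝ} {a b c d : ℤ} (hdet : a * d - b * c = 1)
    (hne : (a : ℝ) + α * b ≠ 0) (j k : ℤ) :
    ((c * j + d * k : ℤ) : ℝ) - ((a * j + b * k : ℤ) : ℝ) * (((c : ℝ) + α * d) / ((a : ℝ) + α * b))
      = ((k : ℝ) - j * α) / ((a : ℝ) + α * b) := by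
  have hdet' : (a : ℝ) * d - b * c = 1 := by exact_mod_cast hdet
  rw [eq_div_iff hne, sub_mul, mul_assoc, div_mul_cancel₀ _ hne]
  push_cast
  linear_combination ((k : ℝ) - j * α) * hdet'

theorem mem_latticeF_iff_sl2Equiv_mem {α β : ℝ} {a b c d : ℤ} (hdet : a * d - b * c = 1)
    (hne : (a : ℝ) + α * b ≠ 0) (p : ℤ × ℤ) :
    p ∈ latticeF α β ↔
      sl2Equiv hdet p ∈ latticeF (((c : ℝ) + α * d) / ((a : ℝ) + α * b)) (β / |(a : ℝ) + α * b|) := by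
  simp only [latticeF, Set.mem_ofPred_eq, sl2Equiv, Equiv.coe_fn_mk]
  rw [sub_mul_slope_eq_div hdet hne, abs_div, div_lt_div_iff_of_pos_right (abs_pos.mpr hne)]

theorem sl2_image_latticeF_general (α β : ℝ) (g11 g12 g21 g22 : ℤ)
    (hdet : g11 * g22 - g12 * g21 = 1) (hne : (g11 : ℝ) + α * g12 ≠ 0) :
    (fun p : ℤ × ℤ => (g11 * p.1 + g12 * p.2, g21 * p.1 + g22 * p.2)) '' latticeF α β =
    latticeF (((g21 : ℝ) + α * g22) / ((g11 : ℝ) + α * g12))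
      (β / |(g11 : ℝ) + α * g12|) := by
  let e := sl2Equiv hdet
  change e '' _ = _
  ext q
  obtain ⟨p, rfl⟩ := e.surjective q
  rw [e.injective.mem_set_image]
  exact mem_latticeF_iff_sl2Equiv_mem hdet hne p

/-- The action of `g ∈ SL(2,ℤ)` on `ℤ²` maps `F(α,β)` onto
`F((g₂₁+αg₂₂)/(g₁₁+αg₁₂), β/|g₁₁+αg₁₂|)` provided `g₁₁+αg₁₂ ≠ 0`. -/
theorem sl2_image_latticeF (α β : ℝ) (hβ : 0 < β) (g11 g12 g21 g22 : ℤ)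
    (hdet : g11 * g22 - g12 * g21 = 1) (hne : (g11 : ℝ) + α * g12 ≠ 0) :
    (fun p : ℤ × ℤ => (g11 * p.1 + g12 * p.2, g21 * p.1 + g22 * p.2)) '' latticeF α β =
    latticeF (((g21 : ℝ) + α * g22) / ((g11 : ℝ) + α * g12))
      (β / |(g11 : ℝ) + α * g12|) :=
  sl2_image_latticeF_general α β g11 g12 g21 g22 hdet hne
end

section
/- A real number α is amply approximable if and only if 1/α is amply approximable (for α irrational, nonzero). -/
open Filter

/-- `α` is amply approximable: there is a sequence `gₙ ∈ SL(2,ℤ)` with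
`|(gₙ)₂₂| → ∞` and `|(gₙ)₂₁ + α (gₙ)₂₂| · |(gₙ)₂₂| · log |(gₙ)₂₂| → 0`. -/
def AmplyApproximable (α : ℝ) : Prop :=
  ∃ g : ℕ → Matrix (Fin 2) (Fin 2) ℤ, (∀ n, (g n).det = 1) ∧
    Tendsto (fun n => |((g n 1 1 : ℤ) : ℝ)|) atTop atTop ∧
    Tendsto (fun n =>
        |((g n 1 0 : ℤ) : ℝ) + α * ((g n 1 1 : ℤ) : ℝ)| * |((g n 1 1 : ℤ) : ℝ)| *
          Real.log |((g n 1 1 : ℤ) : ℝ)|)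
      atTop (nhds 0)

open Topology

/-! Swapping the bottom row `(c, d)` of `g ∈ SL(2,ℤ)` to `(d, c)` stays in `SL(2,ℤ)` after
adjusting the top row, and turns approximations of `α` into approximations of `1/α`:
`|d + c/α| = |c + α d| / |α|`, while `|c| ≈ |α| |d|`, so the extra factors `|c| log |c|`
are at most `4 |α| |d| log |d|` for large `|d|`. -/

noncomputable def approxError (α c d : ℝ) : ℝ := |c + α * d| * |d| * Real.log |d|

lemma approxError_inv_le {α c d : ℝ} (hα : α ≠ 0) (hε : |c + α * d| ≤ |α| * |d|)
    (hc : 1 ≤ |c|) (hd : Real.log (2 * |α|) ≤ Real.log |d|) :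
    approxError α⁻¹ d c ≤ 4 * approxError α c d := by
  have hc_le : |c| ≤ 2 * |α| * |d| := by
    calc |c| = |(c + α * d) - α * d| := by ring_nf
      _ ≤ |c + α * d| + |α * d| := abs_sub _ _
      _ ≤ 2 * |α| * |d| := by rw [abs_mul]; linarith
  have hd_pos : 0 < |d| := pos_of_mul_pos_right (a := 2 * |α|) (by linarith) (by positivity)
  have hlog_le : Real.log |c| ≤ 2 * Real.log |d| := by
    calc Real.log |c| ≤ Real.log (2 * |α| * |d|) := Real.log_le_log (by linarith) hc_le
      _ = Real.log (2 * |α|) + Real.log |d| := Real.log_mul (by positivity) hd_pos.ne'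
      _ ≤ 2 * Real.log |d| := by linarith
  have hflip : |d + α⁻¹ * c| = |c + α * d| / |α| := by
    rw [← abs_div]
    congr 1
    field_simp
    ring
  calc approxError α⁻¹ d c = |c + α * d| / |α| * |c| * Real.log |c| := by
        rw [approxError, hflip]
    _ ≤ |c + α * d| / |α| * (2 * |α| * |d|) * (2 * Real.log |d|) := by
        gcongr
        exact Real.log_nonneg hc
    _ = 4 * approxError α c d := by
        rw [approxError]
        field_simp
        ring

section Tendsto

variable {ι : Type*} {l : Filter ι} {α : ℝ} {c d : ι → ℝ}

lemma tendsto_zero_of_approxError (hd : Tendsto (fun n => |d n|) l atTop)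
    (hE : Tendsto (fun n => approxError α (c n) (d n)) l (𝓝 0)) :
    Tendsto (fun n => c n + α * d n) l (𝓝 0) := by
  refine squeeze_zero_norm' ?_ hE
  filter_upwards [hd.eventually_ge_atTop (Real.exp 1)] with n hn
  have hlog : 1 ≤ Real.log |d n| := by
    rw [Real.le_log_iff_exp_le (by linarith [Real.exp_pos 1])]
    exact hn
  have hd1 : 1 ≤ |d n| := by linarith [Real.add_one_le_exp 1]
  rw [Real.norm_eq_abs, approxError, mul_assoc]
  exact le_mul_of_one_le_right (abs_nonneg _) (one_le_mul_of_one_le_of_one_le hd1 hlog)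

lemma tendsto_abs_atTop_of_approxError (hα : α ≠ 0) (hd : Tendsto (fun n => |d n|) l atTop)
    (hE : Tendsto (fun n => approxError α (c n) (d n)) l (𝓝 0)) :
    Tendsto (fun n => |c n|) l atTop := by
  have hε := (tendsto_zero_of_approxError hd hE).abs
  rw [abs_zero] at hε
  have hαd : Tendsto (fun n => |α| * |d n| - |c n + α * d n|) l atTop :=
    (hd.const_mul_atTop (abs_pos.mpr hα)).atTop_add hε.neg
  refine tendsto_atTop_mono (fun n => ?_) hαd
  calc |α| * |d n| - |c n + α * d n| = |α * d n| - |c n + α * d n| := by rw [abs_mul]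
    _ ≤ |α * d n - (c n + α * d n)| := abs_sub_abs_le_abs_sub _ _
    _ = |c n| := by rw [sub_add_cancel_right, abs_neg]

lemma tendsto_approxError_inv (hα : α ≠ 0) (hd : Tendsto (fun n => |d n|) l atTop)
    (hE : Tendsto (fun n => approxError α (c n) (d n)) l (𝓝 0)) :
    Tendsto (fun n => approxError α⁻¹ (d n) (c n)) l (𝓝 0) := by
  have hε := tendsto_zero_of_approxError hd hE
  have hc := tendsto_abs_atTop_of_approxError hα hd hE
  have hε_le : ∀ᶠ n in l, |c n + α * d n| ≤ |α| * |d n| := by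
    filter_upwards [hε.abs.eventually (ge_mem_nhds (by simp : |(0 : ℝ)| < 1)),
      hd.eventually_ge_atTop |α|⁻¹] with n hn hdn
    calc |c n + α * d n| ≤ 1 := hn
      _ = |α| * |α|⁻¹ := (mul_inv_cancel₀ (abs_pos.mpr hα).ne').symm
      _ ≤ |α| * |d n| := by gcongr
  have hbound : ∀ᶠ n in l, approxError α⁻¹ (d n) (c n) ≤ 4 * approxError α (c n) (d n) := by
    filter_upwards [hε_le, hc.eventually_ge_atTop 1,
      (Real.tendsto_log_atTop.comp hd).eventually_ge_atTop (Real.log (2 * |α|))]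
      with n hεn hcn hdn
    exact approxError_inv_le hα hεn hcn hdn
  have hnonneg : ∀ᶠ n in l, 0 ≤ approxError α⁻¹ (d n) (c n) := by
    filter_upwards [hc.eventually_ge_atTop 1] with n hcn
    have := Real.log_nonneg hcn
    unfold approxError
    positivity
  have h4 : Tendsto (fun n => 4 * approxError α (c n) (d n)) l (𝓝 0) := by
    simpa using hE.const_mul 4
  exact tendsto_of_tendsto_of_tendsto_of_le_of_le' tendsto_const_nhds h4 hnonneg hbound

end Tendsto

lemma exists_det_eq_one_swap_bottom_row {g : Matrix (Fin 2) (Fin 2) ℤ} (hg : g.det = 1) :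
    ∃ h : Matrix (Fin 2) (Fin 2) ℤ, h.det = 1 ∧ h 1 0 = g 1 1 ∧ h 1 1 = g 1 0 := by
  refine ⟨!![-g 0 1, -g 0 0; g 1 1, g 1 0], ?_, rfl, rfl⟩
  rw [Matrix.det_fin_two] at hg
  rw [Matrix.det_fin_two_of]
  linarith

lemma AmplyApproximable.inv {α : ℝ} (hα : α ≠ 0) (h : AmplyApproximable α) :
    AmplyApproximable α⁻¹ := by
  obtain ⟨g, hdet, hd, hE⟩ := h
  choose g' hdet' h10 h11 using fun n => exists_det_eq_one_swap_bottom_row (hdet n)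
  refine ⟨g', hdet', ?_, ?_⟩
  · simpa only [h11] using tendsto_abs_atTop_of_approxError hα hd hE
  · simpa only [approxError, h10, h11] using tendsto_approxError_inv hα hd hE

theorem amplyApproximable_inv_iff_general (α : ℝ) :
    AmplyApproximable α ↔ AmplyApproximable (1 / α) := by
  rw [one_div]
  rcases eq_or_ne α 0 with rfl | hα
  · rw [inv_zero]
  · exact ⟨AmplyApproximable.inv hα, fun h => by simpa using h.inv (inv_ne_zero hα)⟩

/-- An irrational nonzero `α` is amply approximable iff `1/α` is. -/
theorem amplyApproximable_inv_iff (α : ℝ) (hirr : Irrational α) (hα : α ≠ 0) :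
    AmplyApproximable α ↔ AmplyApproximable (1 / α) :=
  amplyApproximable_inv_iff_general α
end

section
/- Let t be a trigonometric polynomial on the circle with Re t > 0, and let ρ(t) = (min Re t)/(2e‖t̂‖₁) and σ(t) = ρ(t)/n(t) where n(t) is the degree of t. If z = e^s e^{2πix} with |s| ≤ σ(t) and P is the Laurent polynomial with t = P(e^{2πi·}), then Re P(z) ≥ (min Re t)/2. -/
/-!
Write `w = e^{2πix}`, so that `t x = ∑ a_j w^j` and `P z = ∑ a_j e^{js} w^j`. Term by term,
`|e^{js} - 1| ≤ 2|js| ≤ 2n|s|` as long as `n|s| ≤ 1`, which holds because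
`min Re t ≤ ‖t̂‖₁`. Hence `|P z - t x| ≤ 2n|s|‖t̂‖₁ ≤ m/e ≤ m/2`, and
`Re P z ≥ Re t x - m/2 ≥ m/2`.
-/

open Complex

lemma exp_two_pi_I_int_mul (j : ℤ) (x : ℝ) :
    exp (2 * Real.pi * I * j * x) = exp (2 * Real.pi * I * x) ^ j := by
  rw [← exp_int_mul]
  ring_nf

lemma norm_exp_two_pi_I_mul (x : ℝ) : ‖exp (2 * Real.pi * I * x)‖ = 1 := by
  rw [show 2 * Real.pi * I * x = ((2 * Real.pi * x : ℝ) : ℂ) * I by push_cast; ring]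
  exact norm_exp_ofReal_mul_I _

lemma norm_laurent_sum_le (F : Finset ℤ) (a : ℤ → ℂ) {w : ℂ} (hw : ‖w‖ = 1) :
    ‖∑ j ∈ F, a j * w ^ j‖ ≤ ∑ j ∈ F, ‖a j‖ :=
  (norm_sum_le _ _).trans_eq <| Finset.sum_congr rfl fun j _ => by
    rw [norm_mul, norm_zpow, hw, one_zpow, mul_one]

lemma norm_laurent_sum_exp_mul_sub_le (n : ℕ) (a : ℤ → ℂ) {w : ℂ} (hw : ‖w‖ = 1) {s : ℝ}
    (hs : n * |s| ≤ 1) :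
    ‖∑ j ∈ Finset.Icc (-(n : ℤ)) n, a j * (Real.exp s * w) ^ j
        - ∑ j ∈ Finset.Icc (-(n : ℤ)) n, a j * w ^ j‖
      ≤ 2 * (n * |s|) * ∑ j ∈ Finset.Icc (-(n : ℤ)) n, ‖a j‖ := by
  rw [← Finset.sum_sub_distrib, Finset.mul_sum]
  refine (norm_sum_le _ _).trans <| Finset.sum_le_sum fun j hj => ?_
  have hj : |(j : ℝ)| ≤ n := by
    rw [Finset.mem_Icc] at hj
    exact abs_le.mpr ⟨by exact_mod_cast hj.1, by exact_mod_cast hj.2⟩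
  have hjs : ‖(j * s : ℂ)‖ ≤ n * |s| := by
    rw [norm_mul, norm_intCast, norm_real, Real.norm_eq_abs]
    exact mul_le_mul_of_nonneg_right hj (abs_nonneg s)
  have hterm : a j * (Real.exp s * w) ^ j - a j * w ^ j = a j * w ^ j * (exp (j * s) - 1) := by
    rw [ofReal_exp, mul_zpow, ← exp_int_mul]
    ring
  calc ‖a j * (Real.exp s * w) ^ j - a j * w ^ j‖
      = ‖a j‖ * ‖exp (j * s) - 1‖ := by
        rw [hterm, norm_mul, norm_mul, norm_zpow, hw, one_zpow, mul_one]
    _ ≤ ‖a j‖ * (2 * (n * |s|)) :=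
        mul_le_mul_of_nonneg_left
          ((norm_exp_sub_one_le (hjs.trans hs)).trans (by linarith)) (norm_nonneg _)
    _ = 2 * (n * |s|) * ‖a j‖ := mul_comm _ _

theorem laurent_re_bound_on_annulus_general (n : ℕ) (a : ℤ → ℂ) (t : ℝ → ℂ)
    (ht : ∀ x : ℝ, t x = ∑ j ∈ Finset.Icc (-(n:ℤ)) (n:ℤ),
      a j * Complex.exp (2 * (Real.pi : ℂ) * Complex.I * (j : ℂ) * (x : ℂ)))
    (hpos : ∀ x : ℝ, 0 < (t x).re)
    (m : ℝ) (hm : IsLeast {y : ℝ | ∃ x : ℝ, y = (t x).re} m)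
    (s x : ℝ)
    (hs : |s| ≤ m / (2 * Real.exp 1 *
        ∑ j ∈ Finset.Icc (-(n:ℤ)) (n:ℤ), ‖a j‖) / n) :
    m / 2 ≤ (∑ j ∈ Finset.Icc (-(n:ℤ)) (n:ℤ),
      a j * ((Real.exp s : ℂ) *
        Complex.exp (2 * (Real.pi : ℂ) * Complex.I * (x : ℂ))) ^ j).re := by
  set A := ∑ j ∈ Finset.Icc (-(n:ℤ)) n, ‖a j‖
  have ht' (y : ℝ) : t y = ∑ j ∈ Finset.Icc (-(n:ℤ)) n, a j * exp (2 * Real.pi * I * y) ^ j := by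
    simp only [ht, exp_two_pi_I_int_mul]
  obtain ⟨x₀, hx₀⟩ := hm.1
  have hm_pos : 0 < m := hx₀ ▸ hpos x₀
  have hmA : m ≤ A := hx₀ ▸ (re_le_norm _).trans
    (ht' x₀ ▸ norm_laurent_sum_le _ a (norm_exp_two_pi_I_mul x₀))
  have hA : 0 < A := hm_pos.trans_le hmA
  have he : 2 < Real.exp 1 := Real.exp_one_gt_two
  have hsn : n * |s| ≤ m / (2 * Real.exp 1 * A) := by
    rw [mul_comm]
    exact mul_le_of_le_div₀ (by positivity) n.cast_nonneg hs
  have hsn₁ : n * |s| ≤ 1 :=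
    hsn.trans <| (div_le_one (by positivity)).mpr (by nlinarith)
  have hdev := norm_laurent_sum_exp_mul_sub_le n a (norm_exp_two_pi_I_mul x) hsn₁
  rw [← ht' x] at hdev
  have hdev' : 2 * (n * |s|) * A ≤ m / 2 := calc
    2 * (n * |s|) * A ≤ 2 * (m / (2 * Real.exp 1 * A)) * A := by gcongr
    _ = m / Real.exp 1 := by field_simp
    _ ≤ m / 2 := by gcongr
  have hre := abs_le.mp ((abs_re_le_norm _).trans (hdev.trans hdev'))
  rw [sub_re] at hre
  linarith [hm.2 ⟨x, rfl⟩]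

/-- Let `t` be a trigonometric polynomial of degree `n` with `Re t > 0`,
`m = min Re t`, `ρ(t) = m/(2e‖t̂‖₁)` and `σ(t) = ρ(t)/n`. If
`z = e^s e^{2πix}` with `|s| ≤ σ(t)`, then the associated Laurent polynomial
`P` satisfies `Re P(z) ≥ m/2`. -/
theorem laurent_re_bound_on_annulus (n : ℕ) (hn : 1 ≤ n) (a : ℤ → ℂ) (t : ℝ → ℂ)
    (ht : ∀ x : ℝ, t x = ∑ j ∈ Finset.Icc (-(n:ℤ)) (n:ℤ),
      a j * Complex.exp (2 * (Real.pi : ℂ) * Complex.I * (j : ℂ) * (x : ℂ)))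
    (hpos : ∀ x : ℝ, 0 < (t x).re)
    (m : ℝ) (hm : IsLeast {y : ℝ | ∃ x : ℝ, y = (t x).re} m)
    (s x : ℝ)
    (hs : |s| ≤ m / (2 * Real.exp 1 *
        ∑ j ∈ Finset.Icc (-(n:ℤ)) (n:ℤ), ‖a j‖) / n) :
    m / 2 ≤ (∑ j ∈ Finset.Icc (-(n:ℤ)) (n:ℤ),
      a j * ((Real.exp s : ℂ) *
        Complex.exp (2 * (Real.pi : ℂ) * Complex.I * (x : ℂ))) ^ j).re :=
  laurent_re_bound_on_annulus_general n a t ht hpos m hm s x hs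
end
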